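/- arXiv:2401.01084 — 3 statements merged into one kernel-verified Lean document; each statement's English description precedes it below -/
import Mathlib

section
/- Let (Λ_t)_{t=1}^{T} be nonnegative real numbers and C₁, C₂ ≥ 0 such that Λ_{t+1} ≤ (1 − 2β_t/τ₀) Λ_t + C₁ β_t^{3/2} + C₂ β_t^{1/2} holds for every integer t with 1 ≤ t ≤ T−1, where T ≥ 1 is an integer. Then Λ_T ≤ τ₀² Λ_1/(T+τ₀−1)² + (2/3) C₁ τ₀^{3/2} (T+τ₀)^{3/2}/(T+τ₀−1)² + (2/5) C₂ τ₀^{1/2} (T+τ₀)^{5/2}/(T+τ₀−1)². -/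
open Real

/-!
Multiplying the recursion at step `t` by `x²`, `x = t + τ₀`, turns the contraction factor
`1 - 2/x` into `x² - 2x ≤ (x - 1)²`, so `u t = (t + τ₀ - 1)² Λ t` satisfies
`u (t + 1) ≤ u t + C₁ τ₀^{3/2} x^{1/2} + C₂ τ₀^{1/2} x^{3/2}`. By Bernoulli's inequality
`p x^{p-1} ≤ (x + 1)^p - x^p`, the forcing terms are bounded by the increments of
`(2/3) C₁ τ₀^{3/2} x^{3/2} + (2/5) C₂ τ₀^{1/2} x^{5/2}`, and the sum telescopes.
-/

theorem mul_rpow_sub_one_le_add_one_rpow_sub {a : ℝ} (ha : 0 < a) {p : ℝ} (hp : 1 ≤ p) :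
    p * a ^ (p - 1) ≤ (a + 1) ^ p - a ^ p := by
  have hbern := one_add_mul_self_le_rpow_one_add (by linarith [inv_pos.2 ha] : -1 ≤ a⁻¹) hp
  have hsplit : (a + 1) ^ p = a ^ p * (1 + a⁻¹) ^ p := by
    rw [← mul_rpow ha.le (by positivity), mul_add, mul_inv_cancel₀ ha.ne', mul_one]
  have := mul_le_mul_of_nonneg_left hbern (rpow_pos_of_pos ha p).le
  rw [hsplit, rpow_sub_one ha.ne', div_eq_mul_inv]
  linarith

theorem sq_mul_div_rpow {τ x : ℝ} (hτ : 0 ≤ τ) (hx : 0 < x) (p : ℝ) :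
    x ^ 2 * (τ / x) ^ p = τ ^ p * x ^ (2 - p) := by
  rw [div_rpow hτ hx.le, rpow_sub hx, rpow_two]
  field_simp

theorem le_add_sub_of_le_add_succ_sub {u g : ℕ → ℝ} {a b : ℕ} (hab : a ≤ b)
    (h : ∀ t, a ≤ t → t < b → u (t + 1) ≤ u t + (g (t + 1) - g t)) :
    u b ≤ u a + (g b - g a) := by
  induction b, hab using Nat.le_induction with
  | base => simp
  | succ b hab ih =>
    have := h b hab (Nat.lt_succ_self b)
    have := ih fun t hat htb => h t hat (htb.trans (Nat.lt_succ_self b))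
    linarith

theorem sq_mul_le_of_le_one_sub_two_div {τ x L L' C₁ C₂ : ℝ} (hτ : 0 < τ) (hx : 0 < x)
    (hL : 0 ≤ L)
    (h : L' ≤ (1 - 2 * (τ / x) / τ) * L + C₁ * (τ / x) ^ ((3 : ℝ) / 2)
      + C₂ * (τ / x) ^ ((1 : ℝ) / 2)) :
    x ^ 2 * L' ≤ (x - 1) ^ 2 * L + C₁ * τ ^ ((3 : ℝ) / 2) * x ^ ((1 : ℝ) / 2)
      + C₂ * τ ^ ((1 : ℝ) / 2) * x ^ ((3 : ℝ) / 2) := by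
  have hcontract : x ^ 2 * (1 - 2 * (τ / x) / τ) = (x - 1) ^ 2 - 1 := by
    field_simp
    ring
  have h32 := sq_mul_div_rpow hτ.le hx ((3 : ℝ) / 2)
  have h12 := sq_mul_div_rpow hτ.le hx ((1 : ℝ) / 2)
  norm_num at h32 h12
  calc x ^ 2 * L'
      ≤ x ^ 2 * ((1 - 2 * (τ / x) / τ) * L + C₁ * (τ / x) ^ ((3 : ℝ) / 2)
          + C₂ * (τ / x) ^ ((1 : ℝ) / 2)) := by gcongr
    _ = ((x - 1) ^ 2 - 1) * L + C₁ * τ ^ ((3 : ℝ) / 2) * x ^ ((1 : ℝ) / 2)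
          + C₂ * τ ^ ((1 : ℝ) / 2) * x ^ ((3 : ℝ) / 2) := by
      rw [← hcontract]
      linear_combination C₁ * h32 + C₂ * h12
    _ ≤ _ := by linarith

noncomputable def forcingPotential (τ C₁ C₂ y : ℝ) : ℝ :=
  (2 / 3) * C₁ * τ ^ ((3 : ℝ) / 2) * y ^ ((3 : ℝ) / 2)
    + (2 / 5) * C₂ * τ ^ ((1 : ℝ) / 2) * y ^ ((5 : ℝ) / 2)

theorem forcingPotential_nonneg {τ C₁ C₂ y : ℝ} (hτ : 0 ≤ τ) (hC₁ : 0 ≤ C₁) (hC₂ : 0 ≤ C₂)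
    (hy : 0 ≤ y) : 0 ≤ forcingPotential τ C₁ C₂ y := by
  unfold forcingPotential
  positivity

theorem le_forcingPotential_add_one_sub {τ C₁ C₂ x : ℝ} (hτ : 0 ≤ τ) (hC₁ : 0 ≤ C₁)
    (hC₂ : 0 ≤ C₂) (hx : 0 < x) :
    C₁ * τ ^ ((3 : ℝ) / 2) * x ^ ((1 : ℝ) / 2) + C₂ * τ ^ ((1 : ℝ) / 2) * x ^ ((3 : ℝ) / 2)
      ≤ forcingPotential τ C₁ C₂ (x + 1) - forcingPotential τ C₁ C₂ x := by
  have h32 := mul_rpow_sub_one_le_add_one_rpow_sub hx (by norm_num : (1 : ℝ) ≤ 3 / 2)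
  have h52 := mul_rpow_sub_one_le_add_one_rpow_sub hx (by norm_num : (1 : ℝ) ≤ 5 / 2)
  norm_num at h32 h52
  have hτ32 : 0 ≤ C₁ * τ ^ ((3 : ℝ) / 2) := by positivity
  have hτ12 : 0 ≤ C₂ * τ ^ ((1 : ℝ) / 2) := by positivity
  unfold forcingPotential
  nlinarith [mul_le_mul_of_nonneg_left h32 hτ32, mul_le_mul_of_nonneg_left h52 hτ12]

/-- Summing the one-step Lyapunov recursion: final-iterate bound. -/
theorem npg_hm_recursion_sum
    (τ₀ : ℝ) (hτ0 : 1 ≤ τ₀)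
    (β : ℕ → ℝ) (hβ : ∀ s : ℕ, β s = τ₀ / (s + τ₀))
    (T : ℕ) (hT : 1 ≤ T)
    (Λ : ℕ → ℝ) (C₁ C₂ : ℝ) (hC1 : 0 ≤ C₁) (hC2 : 0 ≤ C₂)
    (hΛnonneg : ∀ t : ℕ, 1 ≤ t → t ≤ T → 0 ≤ Λ t)
    (hrec : ∀ t : ℕ, 1 ≤ t → t ≤ T - 1 →
      Λ (t + 1) ≤ (1 - 2 * β t / τ₀) * Λ t + C₁ * (β t) ^ ((3 : ℝ) / 2)
        + C₂ * (β t) ^ ((1 : ℝ) / 2)) :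
    Λ T ≤ τ₀ ^ 2 * Λ 1 / ((T : ℝ) + τ₀ - 1) ^ 2
      + (2 / 3) * C₁ * τ₀ ^ ((3 : ℝ) / 2) * ((T : ℝ) + τ₀) ^ ((3 : ℝ) / 2)
          / ((T : ℝ) + τ₀ - 1) ^ 2
      + (2 / 5) * C₂ * τ₀ ^ ((1 : ℝ) / 2) * ((T : ℝ) + τ₀) ^ ((5 : ℝ) / 2)
          / ((T : ℝ) + τ₀ - 1) ^ 2 := by
  have hτ : 0 < τ₀ := by linarith
  have hstep : ∀ t, 1 ≤ t → t < T →
      ((t + 1 : ℕ) + τ₀ - 1) ^ 2 * Λ (t + 1) ≤ ((t : ℝ) + τ₀ - 1) ^ 2 * Λ t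
        + (forcingPotential τ₀ C₁ C₂ ((t + 1 : ℕ) + τ₀)
          - forcingPotential τ₀ C₁ C₂ ((t : ℝ) + τ₀)) := by
    intro t ht htT
    have hx : 0 < (t : ℝ) + τ₀ := by positivity
    have hrec_t := hrec t ht (by omega)
    rw [hβ t] at hrec_t
    have hsq := sq_mul_le_of_le_one_sub_two_div hτ hx (hΛnonneg t ht htT.le) hrec_t
    have hinc := le_forcingPotential_add_one_sub hτ.le hC1 hC2 hx
    push_cast
    rw [show (t : ℝ) + 1 + τ₀ - 1 = t + τ₀ by ring, show (t : ℝ) + 1 + τ₀ = t + τ₀ + 1 by ring]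
    linarith
  have hsum := le_add_sub_of_le_add_succ_sub (u := fun t : ℕ => ((t : ℝ) + τ₀ - 1) ^ 2 * Λ t)
    (g := fun t : ℕ => forcingPotential τ₀ C₁ C₂ ((t : ℝ) + τ₀)) hT hstep
  have hg1 := forcingPotential_nonneg hτ.le hC1 hC2 (by positivity : (0 : ℝ) ≤ (1 : ℕ) + τ₀)
  have hd : (0 : ℝ) < ((T : ℝ) + τ₀ - 1) ^ 2 := by
    have : (1 : ℝ) ≤ T := by exact_mod_cast hT
    have : 0 < (T : ℝ) + τ₀ - 1 := by linarith
    positivity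
  rw [← add_div, ← add_div, le_div_iff₀ hd]
  unfold forcingPotential at hsum hg1
  norm_num at hsum hg1 ⊢
  linarith
end

section
/- Let M_g > 0, μ_F > 0, α₀ > 0 be real numbers, let τ₀ ≥ 20 be a real number, and let t ≥ 1 be an integer. With β_t = τ₀/(t + τ₀), α_t = α₀ β_t^{1/2}, λ_t = λ₀ β_t^{−1/2}, and λ₀ = τ₀ M_g α₀/(4 μ_F²), one has 4 M_g α_t/μ_F² + λ_t − λ_{t−1} − λ_t β_{t+1} ≤ −(M_g/(2 μ_F²)) α_t. -/
/-! With x = t + τ₀ and K = M_g α₀ / μ_F², every term is a multiple of K √τ₀ / √x, and the claim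
reduces to (18 + x - √x √(x - 1)) (x + 1) ≤ τ₀ x. As √x √(x - 1) ≥ x - 1, the left side is at
most 19 (x + 1) ≤ 20 x ≤ τ₀ x, since x ≥ 21. -/

open Real

theorem Real.rpow_neg_one_half_eq_sqrt_inv {y : ℝ} (hy : 0 ≤ y) : y ^ (-(1 : ℝ) / 2) = √y⁻¹ := by
  rw [neg_div, rpow_neg hy, sqrt_inv, sqrt_eq_rpow]

theorem Real.sub_one_le_sqrt_mul_sqrt_sub_one {x : ℝ} (hx : 1 ≤ x) : x - 1 ≤ √x * √(x - 1) := by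
  rw [← sqrt_mul (by linarith), le_sqrt (by linarith) (by nlinarith)]
  nlinarith

theorem schedule_gap_le (K τ x : ℝ) (hK : 0 ≤ K) (hτ : 20 ≤ τ) (hx : 19 ≤ x) :
    4 * K * √(τ / x) + τ * K / 4 * √(x / τ) - τ * K / 4 * √((x - 1) / τ)
        - τ * K / 4 * √(x / τ) * (τ / (x + 1))
      ≤ -(K / 2) * √(τ / x) := by
  have hτ0 : 0 < τ := by linarith
  have hx0 : 0 < x := by linarith
  have hbracket : (18 + x - √x * √(x - 1)) * (x + 1) ≤ τ * x := by
    nlinarith [sub_one_le_sqrt_mul_sqrt_sub_one (by linarith : 1 ≤ x)]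
  have hgap : -(K / 2) * √(τ / x) - (4 * K * √(τ / x) + τ * K / 4 * √(x / τ)
        - τ * K / 4 * √((x - 1) / τ) - τ * K / 4 * √(x / τ) * (τ / (x + 1)))
      = K * √τ / (4 * √x * (x + 1)) * (τ * x - (18 + x - √x * √(x - 1)) * (x + 1)) := by
    have hsτ : √τ ^ 2 = τ := sq_sqrt hτ0.le
    have hsx : √x ^ 2 = x := sq_sqrt hx0.le
    rw [sqrt_div hτ0.le, sqrt_div hx0.le, sqrt_div (by linarith)]
    have : 0 < √τ := sqrt_pos.2 hτ0
    have : 0 < √x := sqrt_pos.2 hx0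
    field_simp
    -- Freeze the roots as atoms, so that `τ` and `x` can then be replaced by their squares.
    set s := √τ
    set a := √x
    set b := √(x - 1)
    rw [← hsτ, ← hsx]
    ring
  have : 0 ≤ K * √τ / (4 * √x * (x + 1)) * (τ * x - (18 + x - √x * √(x - 1)) * (x + 1)) :=
    mul_nonneg (by positivity) (by linarith)
  linarith

theorem npg_hm_schedule_bound_general
    (M_g μ_F α₀ τ₀ : ℝ) (hMg : 0 < M_g) (hα₀ : 0 < α₀)
    (hτ0 : 20 ≤ τ₀) (t : ℕ) (ht : 1 ≤ t)
    (β : ℕ → ℝ) (hβ : ∀ s : ℕ, β s = τ₀ / (s + τ₀))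
    (lam₀ : ℝ) (hlam₀ : lam₀ = τ₀ * M_g * α₀ / (4 * μ_F ^ 2))
    (α lam : ℕ → ℝ)
    (hα : ∀ s : ℕ, α s = α₀ * (β s) ^ ((1 : ℝ) / 2))
    (hlam : ∀ s : ℕ, lam s = lam₀ * (β s) ^ (-(1 : ℝ) / 2)) :
    4 * M_g * α t / μ_F ^ 2 + lam t - lam (t - 1) - lam t * β (t + 1)
      ≤ -(M_g / (2 * μ_F ^ 2)) * α t := by
  have hα_sqrt (s : ℕ) : α s = α₀ * √(τ₀ / (s + τ₀)) := by rw [hα, hβ, sqrt_eq_rpow]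
  have hlam_sqrt (s : ℕ) : lam s = lam₀ * √((s + τ₀) / τ₀) := by
    rw [hlam, hβ, rpow_neg_one_half_eq_sqrt_inv (by positivity), inv_div]
  have hpred : ((t - 1 : ℕ) : ℝ) + τ₀ = (t + τ₀) - 1 := by rw [Nat.cast_sub ht]; ring
  have hsucc : ((t + 1 : ℕ) : ℝ) + τ₀ = (t + τ₀) + 1 := by push_cast; ring
  have hgap := schedule_gap_le (M_g * α₀ / μ_F ^ 2) τ₀ (t + τ₀) (by positivity) hτ0
    (by linarith [(Nat.one_le_cast (α := ℝ)).2 ht])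
  rw [hα_sqrt, hlam_sqrt, hlam_sqrt, hβ, hpred, hsucc, hlam₀]
  convert hgap using 1 <;> ring

/-- Step-size/dual-variable schedule inequality from the proof of Lemma 3. -/
theorem npg_hm_schedule_bound
    (M_g μ_F α₀ τ₀ : ℝ) (hMg : 0 < M_g) (hμF : 0 < μ_F) (hα₀ : 0 < α₀)
    (hτ0 : 20 ≤ τ₀) (t : ℕ) (ht : 1 ≤ t)
    (β : ℕ → ℝ) (hβ : ∀ s : ℕ, β s = τ₀ / (s + τ₀))
    (lam₀ : ℝ) (hlam₀ : lam₀ = τ₀ * M_g * α₀ / (4 * μ_F ^ 2))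
    (α lam : ℕ → ℝ)
    (hα : ∀ s : ℕ, α s = α₀ * (β s) ^ ((1 : ℝ) / 2))
    (hlam : ∀ s : ℕ, lam s = lam₀ * (β s) ^ (-(1 : ℝ) / 2)) :
    4 * M_g * α t / μ_F ^ 2 + lam t - lam (t - 1) - lam t * β (t + 1)
      ≤ -(M_g / (2 * μ_F ^ 2)) * α t :=
  npg_hm_schedule_bound_general M_g μ_F α₀ τ₀ hMg hα₀ hτ0 t ht β hβ lam₀ hlam₀ α lam hα hlam
end

section
/- Let (Ω, ℱ, P) be a probability space and x : Ω → ℝ^d a random vector with ‖x(ω)‖² ≤ M_g almost surely, where M_g > 0. Assume the matrix F := E[x xᵀ] satisfies F ⪰ μ_F I_d for some μ_F > 0 (so F is invertible). Fix u ∈ ℝ^d, set ŵ = F⁻¹ u, and define the residual ξ(ω) = u − ⟨ŵ, x(ω)⟩ x(ω). Then E[ξ] = 0 and E[ξ ξᵀ] ⪯ (2 M_g/μ_F²) ‖u‖² F in the Loewner (positive-semidefinite) order. -/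
/-!
Since `F ŵ = u`, the identity `E[⟪w, x⟫ x] = F w` gives `E[⟪ŵ, x⟫ x] = u`, so `ξ` is centred.
For a direction `v`, put `Z = ⟪ŵ, x⟫ ⟪v, x⟫`; then `E Z = ⟪v, F ŵ⟫ = ⟪v, u⟫` and `⟪v, ξ⟫ = E Z - Z`,
so `vᵀ E[ξ ξᵀ] v = Var Z ≤ E[Z²] ≤ M_g ‖ŵ‖² E[⟪v, x⟫²] = M_g ‖ŵ‖² vᵀ F v`.
Finally `F ⪰ μ_F I` gives `μ_F ‖ŵ‖² ≤ ⟪ŵ, F ŵ⟫ = ⟪ŵ, u⟫ ≤ ‖ŵ‖ ‖u‖`, i.e. `‖ŵ‖ ≤ ‖u‖ / μ_F`.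
-/

open Real MeasureTheory ProbabilityTheory
open scoped RealInnerProductSpace Matrix

lemma memLp_top_of_norm_sq_le {Ω E : Type*} [MeasurableSpace Ω] [NormedAddCommGroup E]
    {P : Measure Ω} {x : Ω → E} (hx : AEStronglyMeasurable x P) {M : ℝ}
    (hbound : ∀ᵐ ω ∂P, ‖x ω‖ ^ 2 ≤ M) : MemLp x ⊤ P :=
  memLp_top_of_bound hx √M <| by
    filter_upwards [hbound] with ω hω using Real.le_sqrt_of_sq_le hω

section SecondMoment

variable {Ω ι : Type*} [MeasurableSpace Ω] {P : Measure Ω}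

noncomputable def secondMomentMatrix (P : Measure Ω) (y : Ω → EuclideanSpace ℝ ι) :
    Matrix ι ι ℝ :=
  Matrix.of fun i j => ∫ ω, y ω i * y ω j ∂P

lemma isHermitian_secondMomentMatrix (y : Ω → EuclideanSpace ℝ ι) :
    (secondMomentMatrix P y).IsHermitian := by
  ext i j
  simp [secondMomentMatrix, mul_comm]

lemma MeasureTheory.MemLp.integrable_coord_mul_coord [Fintype ι] {y : Ω → EuclideanSpace ℝ ι}
    (hy : MemLp y 2 P) (i j : ι) : Integrable (fun ω => y ω i * y ω j) P := by
  have hcoord (k : ι) : MemLp (fun ω => y ω k) 2 P :=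
    (EuclideanSpace.proj (𝕜 := ℝ) k).comp_memLp' hy
  exact (hcoord i).integrable_mul (hcoord j)

lemma integral_inner_mul_inner_eq_dotProduct_secondMomentMatrix_mulVec [Fintype ι]
    {y : Ω → EuclideanSpace ℝ ι} (hy : MemLp y 2 P) (v w : EuclideanSpace ℝ ι) :
    ∫ ω, ⟪v, y ω⟫ * ⟪w, y ω⟫ ∂P = v.ofLp ⬝ᵥ (secondMomentMatrix P y *ᵥ w.ofLp) := by
  have hexpand (ω : Ω) : ⟪v, y ω⟫ * ⟪w, y ω⟫ = ∑ i, ∑ j, v i * w j * (y ω i * y ω j) := by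
    simp only [PiLp.inner_apply, RCLike.inner_apply, conj_trivial, Finset.sum_mul_sum]
    exact Finset.sum_congr rfl fun i _ => Finset.sum_congr rfl fun j _ => by ring
  simp_rw [hexpand]
  rw [integral_finsetSum _ fun i _ => integrable_finsetSum _ fun j _ =>
    (hy.integrable_coord_mul_coord i j).const_mul _]
  simp_rw [integral_finsetSum _ fun j _ => (hy.integrable_coord_mul_coord _ j).const_mul _,
    integral_const_mul]
  simp only [dotProduct, Matrix.mulVec, secondMomentMatrix, Matrix.of_apply, Finset.mul_sum]
  exact Finset.sum_congr rfl fun i _ => Finset.sum_congr rfl fun j _ => by ring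

lemma posSemidef_secondMomentMatrix [Fintype ι] {y : Ω → EuclideanSpace ℝ ι}
    (hy : MemLp y 2 P) : (secondMomentMatrix P y).PosSemidef := by
  refine .of_dotProduct_mulVec_nonneg (isHermitian_secondMomentMatrix y) fun v => ?_
  rw [star_trivial, ← WithLp.ofLp_toLp 2 v,
    ← integral_inner_mul_inner_eq_dotProduct_secondMomentMatrix_mulVec hy]
  exact integral_nonneg fun ω => mul_self_nonneg _

lemma integral_inner_smul_eq_toLp_secondMomentMatrix_mulVec [Fintype ι]
    {y : Ω → EuclideanSpace ℝ ι} (hy : MemLp y 2 P) (w : EuclideanSpace ℝ ι) :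
    ∫ ω, ⟪w, y ω⟫ • y ω ∂P = WithLp.toLp 2 (secondMomentMatrix P y *ᵥ w.ofLp) := by
  have hint : Integrable (fun ω => ⟪w, y ω⟫ • y ω) P :=
    memLp_one_iff_integrable.1 (hy.smul (hy.const_inner (𝕜 := ℝ) w) (p := 2))
  refine ext_inner_left ℝ fun v => ?_
  simp_rw [← integral_inner hint, inner_smul_right]
  rw [integral_congr_ae (.of_forall fun ω => mul_comm _ _),
    integral_inner_mul_inner_eq_dotProduct_secondMomentMatrix_mulVec hy,
    EuclideanSpace.inner_eq_star_dotProduct, star_trivial, dotProduct_comm]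

lemma integral_sub_inner_smul_eq_zero [Fintype ι] [IsProbabilityMeasure P]
    {x : Ω → EuclideanSpace ℝ ι} (hx : MemLp x 2 P) {u w : EuclideanSpace ℝ ι}
    (hw : secondMomentMatrix P x *ᵥ w.ofLp = u.ofLp) :
    ∫ ω, u - ⟪w, x ω⟫ • x ω ∂P = 0 := by
  have hint : Integrable (fun ω => ⟪w, x ω⟫ • x ω) P :=
    memLp_one_iff_integrable.1 (hx.smul (hx.const_inner (𝕜 := ℝ) w) (p := 2))
  rw [integral_sub (integrable_const u) hint, integral_const, probReal_univ, one_smul,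
    integral_inner_smul_eq_toLp_secondMomentMatrix_mulVec hx, hw, WithLp.toLp_ofLp, sub_self]

lemma posSemidef_smul_secondMomentMatrix_sub_secondMomentMatrix_sub_inner_smul [Fintype ι]
    [IsProbabilityMeasure P] {x : Ω → EuclideanSpace ℝ ι} (hx : AEStronglyMeasurable x P)
    {M : ℝ} (hbound : ∀ᵐ ω ∂P, ‖x ω‖ ^ 2 ≤ M) {u w : EuclideanSpace ℝ ι}
    (hw : secondMomentMatrix P x *ᵥ w.ofLp = u.ofLp) :
    ((M * ‖w‖ ^ 2) • secondMomentMatrix P x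
      - secondMomentMatrix P (fun ω => u - ⟪w, x ω⟫ • x ω)).PosSemidef := by
  have hx_top : MemLp x ⊤ P := memLp_top_of_norm_sq_le hx hbound
  have hx2 : MemLp x 2 P := hx_top.mono_exponent le_top
  have hξ2 : MemLp (fun ω => u - ⟪w, x ω⟫ • x ω) 2 P :=
    ((memLp_const u).sub (hx_top.smul (hx_top.const_inner (𝕜 := ℝ) w))).mono_exponent le_top
  refine .of_dotProduct_mulVec_nonneg (((isHermitian_secondMomentMatrix x).smul
    (IsSelfAdjoint.all _)).sub (isHermitian_secondMomentMatrix _)) fun v => ?_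
  rw [star_trivial, Matrix.sub_mulVec, dotProduct_sub, Matrix.smul_mulVec, dotProduct_smul,
    ← WithLp.ofLp_toLp 2 v, smul_eq_mul, sub_nonneg,
    ← integral_inner_mul_inner_eq_dotProduct_secondMomentMatrix_mulVec hx2,
    ← integral_inner_mul_inner_eq_dotProduct_secondMomentMatrix_mulVec hξ2]
  set v' := WithLp.toLp 2 v
  set Z : Ω → ℝ := fun ω => ⟪v', x ω⟫ * ⟪w, x ω⟫
  have hZ_top : MemLp Z ⊤ P := (hx_top.const_inner w).mul (hx_top.const_inner v')
  have hZ_mean : ∫ ω, Z ω ∂P = ⟪v', u⟫ := by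
    rw [integral_inner_mul_inner_eq_dotProduct_secondMomentMatrix_mulVec hx2, hw,
      EuclideanSpace.inner_eq_star_dotProduct, star_trivial, dotProduct_comm]
  have hres (ω : Ω) : ⟪v', u - ⟪w, x ω⟫ • x ω⟫ = -(Z ω - ∫ ω', Z ω' ∂P) := by
    rw [hZ_mean, inner_sub_right, inner_smul_right]; ring
  have hZ_sq : ∀ᵐ ω ∂P, Z ω ^ 2 ≤ M * ‖w‖ ^ 2 * (⟪v', x ω⟫ * ⟪v', x ω⟫) := by
    filter_upwards [hbound] with ω hω
    have hwx : ⟪w, x ω⟫ ^ 2 ≤ M * ‖w‖ ^ 2 :=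
      calc ⟪w, x ω⟫ ^ 2 ≤ (‖w‖ * ‖x ω‖) ^ 2 := by
            rw [← sq_abs]; gcongr; exact abs_real_inner_le_norm w (x ω)
        _ ≤ M * ‖w‖ ^ 2 := by rw [mul_pow, mul_comm M]; gcongr
    calc Z ω ^ 2 = ⟪w, x ω⟫ ^ 2 * (⟪v', x ω⟫ * ⟪v', x ω⟫) := by ring
      _ ≤ M * ‖w‖ ^ 2 * (⟪v', x ω⟫ * ⟪v', x ω⟫) := by gcongr; exact mul_self_nonneg _
  calc ∫ ω, ⟪v', u - ⟪w, x ω⟫ • x ω⟫ * ⟪v', u - ⟪w, x ω⟫ • x ω⟫ ∂P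
      = ∫ ω, (Z ω - ∫ ω', Z ω' ∂P) ^ 2 ∂P := by simp_rw [hres, neg_mul_neg, ← sq]
    _ ≤ ∫ ω, Z ω ^ 2 ∂P := by
      rw [← variance_eq_integral hZ_top.aestronglyMeasurable.aemeasurable]
      exact variance_le_expectation_sq hZ_top.aestronglyMeasurable
    _ ≤ ∫ ω, M * ‖w‖ ^ 2 * (⟪v', x ω⟫ * ⟪v', x ω⟫) ∂P :=
      integral_mono_ae (hZ_top.mono_exponent le_top).integrable_sq
        (((hx2.const_inner v').integrable_mul (hx2.const_inner v')).const_mul _) hZ_sq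
    _ = M * ‖w‖ ^ 2 * ∫ ω, ⟪v', x ω⟫ * ⟪v', x ω⟫ ∂P := integral_const_mul _ _

end SecondMoment

section LoewnerLowerBound

variable {ι : Type*} [DecidableEq ι] {A : Matrix ι ι ℝ} {μ : ℝ}

lemma Matrix.PosSemidef.posDef_of_sub_smul_one (hA : (A - μ • 1).PosSemidef) (hμ : 0 < μ) :
    A.PosDef := by
  simpa using Matrix.PosDef.posSemidef_add hA (Matrix.PosDef.one.smul hμ)

lemma Matrix.PosSemidef.mul_norm_le_norm_of_mulVec_eq [Fintype ι] (hA : (A - μ • 1).PosSemidef)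
    {w u : EuclideanSpace ℝ ι} (hw : A *ᵥ w.ofLp = u.ofLp) : μ * ‖w‖ ≤ ‖u‖ := by
  have hquad := hA.dotProduct_mulVec_nonneg w.ofLp
  rw [star_trivial, Matrix.sub_mulVec, Matrix.smul_mulVec, Matrix.one_mulVec, hw,
    dotProduct_sub, dotProduct_smul, smul_eq_mul, sub_nonneg] at hquad
  have hww : w.ofLp ⬝ᵥ w.ofLp = ‖w‖ ^ 2 := by
    rw [← real_inner_self_eq_norm_sq, EuclideanSpace.inner_eq_star_dotProduct, star_trivial]
  have hwu : w.ofLp ⬝ᵥ u.ofLp ≤ ‖w‖ * ‖u‖ := by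
    rw [dotProduct_comm, ← star_trivial w.ofLp, ← EuclideanSpace.inner_eq_star_dotProduct]
    exact real_inner_le_norm w u
  rcases (norm_nonneg w).eq_or_lt with hw0 | hw0
  · rw [← hw0, mul_zero]
    exact norm_nonneg u
  · rw [hww] at hquad
    refine le_of_mul_le_mul_left ?_ hw0
    linarith [show ‖w‖ * (μ * ‖w‖) = μ * ‖w‖ ^ 2 by ring]

end LoewnerLowerBound

theorem residual_mean_zero_and_covariance_bound_general
    (d : ℕ)
    (Ω : Type*) [MeasurableSpace Ω] (P : Measure Ω) [IsProbabilityMeasure P]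
    (M_g μ_F : ℝ) (hμF : 0 < μ_F)
    (x : Ω → EuclideanSpace ℝ (Fin d)) (hmeas : Measurable x)
    (hbound : ∀ᵐ ω ∂P, ‖x ω‖ ^ 2 ≤ M_g)
    (F : Matrix (Fin d) (Fin d) ℝ)
    (hF : F = Matrix.of fun i j => ∫ ω, x ω i * x ω j ∂P)
    (hFpos : (F - μ_F • (1 : Matrix (Fin d) (Fin d) ℝ)).PosSemidef)
    (u : EuclideanSpace ℝ (Fin d))
    (what : EuclideanSpace ℝ (Fin d))
    (hwhat : ∀ i, what i = (F⁻¹).mulVec (fun j => u j) i)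
    (ξ : Ω → EuclideanSpace ℝ (Fin d))
    (hξ : ∀ ω, ξ ω = u - ⟪what, x ω⟫ • x ω) :
    (∫ ω, ξ ω ∂P) = 0
    ∧ ((2 * M_g / μ_F ^ 2 * ‖u‖ ^ 2) • F
        - Matrix.of fun i j => ∫ ω, ξ ω i * ξ ω j ∂P).PosSemidef := by
  change F = secondMomentMatrix P x at hF
  obtain rfl : ξ = fun ω => u - ⟪what, x ω⟫ • x ω := funext hξ
  have hFw : F *ᵥ what.ofLp = u.ofLp := by
    have hdet := (Matrix.isUnit_iff_isUnit_det F).1 (hFpos.posDef_of_sub_smul_one hμF).isUnit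
    rw [show what.ofLp = F⁻¹ *ᵥ u.ofLp from funext hwhat, Matrix.mulVec_mulVec,
      Matrix.mul_nonsing_inv F hdet, Matrix.one_mulVec]
  subst hF
  have hM : 0 ≤ M_g := by
    obtain ⟨ω, hω⟩ := hbound.exists
    exact (sq_nonneg _).trans hω
  have hx2 : MemLp x 2 P :=
    (memLp_top_of_norm_sq_le hmeas.aestronglyMeasurable hbound).mono_exponent le_top
  have hwhat_norm : ‖what‖ ≤ ‖u‖ / μ_F :=
    (le_div_iff₀' hμF).2 (hFpos.mul_norm_le_norm_of_mulVec_eq hFw)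
  have hcoef : M_g * ‖what‖ ^ 2 ≤ 2 * M_g / μ_F ^ 2 * ‖u‖ ^ 2 :=
    calc M_g * ‖what‖ ^ 2 ≤ M_g * (‖u‖ / μ_F) ^ 2 := by gcongr
      _ ≤ 2 * M_g / μ_F ^ 2 * ‖u‖ ^ 2 := by
        rw [div_pow, mul_div_assoc', div_mul_eq_mul_div]
        gcongr
        linarith
  refine ⟨integral_sub_inner_smul_eq_zero hx2 hFw, ?_⟩
  have hsum := (posSemidef_smul_secondMomentMatrix_sub_secondMomentMatrix_sub_inner_smul
    hmeas.aestronglyMeasurable hbound hFw).add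
    ((posSemidef_secondMomentMatrix hx2).smul (sub_nonneg.2 hcoef))
  change ((2 * M_g / μ_F ^ 2 * ‖u‖ ^ 2) • secondMomentMatrix P x
    - secondMomentMatrix P _).PosSemidef
  convert hsum using 1
  module

/-- Residual moment bounds for the least-squares sub-problem: the residual
`ξ = u - ⟪ŵ, x⟫ x` with `ŵ = F⁻¹ u` has mean zero and covariance bounded by
`(2 M_g / μ_F²) ‖u‖² F` in the Loewner order. -/
theorem residual_mean_zero_and_covariance_bound
    (d : ℕ) (hd : 1 ≤ d)
    (Ω : Type*) [MeasurableSpace Ω] (P : Measure Ω) [IsProbabilityMeasure P]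
    (M_g μ_F : ℝ) (hMg : 0 < M_g) (hμF : 0 < μ_F)
    (x : Ω → EuclideanSpace ℝ (Fin d)) (hmeas : Measurable x)
    (hbound : ∀ᵐ ω ∂P, ‖x ω‖ ^ 2 ≤ M_g)
    (F : Matrix (Fin d) (Fin d) ℝ)
    (hF : F = Matrix.of fun i j => ∫ ω, x ω i * x ω j ∂P)
    (hFpos : (F - μ_F • (1 : Matrix (Fin d) (Fin d) ℝ)).PosSemidef)
    (u : EuclideanSpace ℝ (Fin d))
    (what : EuclideanSpace ℝ (Fin d))
    (hwhat : ∀ i, what i = (F⁻¹).mulVec (fun j => u j) i)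
    (ξ : Ω → EuclideanSpace ℝ (Fin d))
    (hξ : ∀ ω, ξ ω = u - ⟪what, x ω⟫ • x ω) :
    (∫ ω, ξ ω ∂P) = 0
    ∧ ((2 * M_g / μ_F ^ 2 * ‖u‖ ^ 2) • F
        - Matrix.of fun i j => ∫ ω, ξ ω i * ξ ω j ∂P).PosSemidef :=
  residual_mean_zero_and_covariance_bound_general d Ω P M_g μ_F hμF x hmeas hbound F hF hFpos u what
    hwhat ξ hξ
end
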